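/- Completeness upgrades the observed outcome bridge equation to the latent outcome bridge equation (completeness step in the proof of Theorem 1): Assume (i) (Y₀, W) ⫫ (Z, R) | (U, X); (ii) completeness: for every x ∈ 𝒳 and every function g : 𝒰 → ℝ, if E[g(U) | Z = z, X = x, R = 1] = 0 for every z with P(Z = z, X = x, R = 1) > 0, then g(u) = 0 for every u with P(U = u, X = x, R = 1) > 0; (iii) h : 𝒲 × 𝒳 → ℝ satisfies the observed equation E[ Y₀ | Z = z, X = x, R = 1 ] = E[ h(W, X) | Z = z, X = x, R = 1 ] for every (z, x) with P(Z = z, X = x, R = 1) > 0. Then E[ Y₀ | U = u, X = x, R = 1 ] = E[ h(W, X) | U = u, X = x, R = 1 ] for every (u, x) with P(U = u, X = x, R = 1) > 0. -/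

import Mathlib

open Finset

noncomputable section

open scoped Classical

variable {Ω : Type*} [Fintype Ω]

/-- Probability of an event `A` under the weight function `p`. -/
def pr (p : Ω → ℝ) (A : Ω → Prop) : ℝ := ∑ ω, if A ω then p ω else 0

/-- Expectation of a real random variable `Y` under the weight function `p`. -/
def ex (p : Ω → ℝ) (Y : Ω → ℝ) : ℝ := ∑ ω, p ω * Y ω

/-- Conditional probability `P(A | B)`. -/
def cpr (p : Ω → ℝ) (A B : Ω → Prop) : ℝ := pr p (fun ω => A ω ∧ B ω) / pr p B

/-- Conditional expectation `E[Y | B]`. -/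
def cex (p : Ω → ℝ) (Y : Ω → ℝ) (B : Ω → Prop) : ℝ :=
  (∑ ω, if B ω then p ω * Y ω else 0) / pr p B

/-- unnormalized expectation over an event -/
def ex0 (p : Ω → ℝ) (f : Ω → ℝ) (A : Ω → Prop) : ℝ := ∑ ω, if A ω then p ω * f ω else 0

lemma pr_congr (p : Ω → ℝ) {A B : Ω → Prop} (h : ∀ ω, A ω ↔ B ω) : pr p A = pr p B :=
  Finset.sum_congr rfl (fun ω _ => by simp [h ω])

lemma ex0_congr (p : Ω → ℝ) (f : Ω → ℝ) {A B : Ω → Prop} (h : ∀ ω, A ω ↔ B ω) :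
    ex0 p f A = ex0 p f B :=
  Finset.sum_congr rfl (fun ω _ => by simp [h ω])

lemma pr_nonneg (p : Ω → ℝ) (hp : ∀ ω, 0 ≤ p ω) (A : Ω → Prop) : 0 ≤ pr p A :=
  Finset.sum_nonneg fun ω _ => by by_cases h : A ω <;> simp [h, hp ω]

lemma pr_mono (p : Ω → ℝ) (hp : ∀ ω, 0 ≤ p ω) {A B : Ω → Prop} (h : ∀ ω, A ω → B ω) :
    pr p A ≤ pr p B := by
  refine Finset.sum_le_sum fun ω _ => ?_
  by_cases hA : A ω
  · simp [hA, h ω hA]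
  · by_cases hB : B ω <;> simp [hA, hB, hp ω]

lemma pr_eq_zero_imp (p : Ω → ℝ) (hp : ∀ ω, 0 ≤ p ω) {A : Ω → Prop} (h : pr p A = 0) :
    ∀ ω, A ω → p ω = 0 := by
  intro ω hA
  have := (Finset.sum_eq_zero_iff_of_nonneg
    (fun ω _ => by by_cases h : A ω <;> simp [h, hp ω])).1 h ω (Finset.mem_univ ω)
  simpa [hA] using this

lemma ex0_eq_zero_of_pr_eq_zero (p : Ω → ℝ) (hp : ∀ ω, 0 ≤ p ω) (f : Ω → ℝ)
    {A : Ω → Prop} (h : pr p A = 0) : ex0 p f A = 0 := by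
  refine Finset.sum_eq_zero fun ω _ => ?_
  by_cases hA : A ω
  · simp [hA, pr_eq_zero_imp p hp h ω hA]
  · simp [hA]

/-- partition of an event by the value of a finite random variable -/
lemma ex0_partition {ι : Type*} [Fintype ι] (p : Ω → ℝ) (f : Ω → ℝ) (V : Ω → ι)
    (A : Ω → Prop) : ex0 p f A = ∑ i, ex0 p f (fun ω => A ω ∧ V ω = i) := by
  unfold ex0
  rw [Finset.sum_comm]
  refine Finset.sum_congr rfl fun ω _ => ?_
  by_cases hA : A ω
  · simp [hA]
  · simp [hA]

lemma pr_partition {ι : Type*} [Fintype ι] (p : Ω → ℝ) (V : Ω → ι)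
    (A : Ω → Prop) : pr p A = ∑ i, pr p (fun ω => A ω ∧ V ω = i) := by
  unfold pr
  rw [Finset.sum_comm]
  refine Finset.sum_congr rfl fun ω _ => ?_
  by_cases hA : A ω
  · simp [hA]
  · simp [hA]

/-- grouping by values of (Y0, W) -/
lemma ex0_group {𝒲 : Type*} [Fintype 𝒲] (p : Ω → ℝ) (Y0 : Ω → ℝ) (W : Ω → 𝒲)
    (F : ℝ → 𝒲 → ℝ) (A : Ω → Prop) :
    ex0 p (fun ω => F (Y0 ω) (W ω)) A
      = ∑ y ∈ Finset.image Y0 Finset.univ, ∑ w,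
          F y w * pr p (fun ω => A ω ∧ Y0 ω = y ∧ W ω = w) := by
  have hmul : ∀ (y : ℝ) (w : 𝒲), F y w * pr p (fun ω => A ω ∧ Y0 ω = y ∧ W ω = w)
      = ∑ ω, if A ω ∧ Y0 ω = y ∧ W ω = w then p ω * F y w else 0 := by
    intro y w
    unfold pr
    rw [Finset.mul_sum]
    refine Finset.sum_congr rfl fun ω _ => ?_
    by_cases hc : A ω ∧ Y0 ω = y ∧ W ω = w
    · rw [if_pos hc, if_pos hc, mul_comm]
    · rw [if_neg hc, if_neg hc, mul_zero]
  have key : ∀ ω, (if A ω then p ω * F (Y0 ω) (W ω) else 0)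
      = ∑ y ∈ Finset.image Y0 Finset.univ, ∑ w,
          (if A ω ∧ Y0 ω = y ∧ W ω = w then p ω * F y w else 0) := by
    intro ω
    by_cases hA : A ω
    · have hmem : Y0 ω ∈ Finset.image Y0 Finset.univ :=
        Finset.mem_image_of_mem _ (Finset.mem_univ ω)
      have step : ∀ y : ℝ, (∑ w, if A ω ∧ Y0 ω = y ∧ W ω = w then p ω * F y w else 0)
          = if Y0 ω = y then p ω * F y (W ω) else 0 := by
        intro y
        by_cases hy : Y0 ω = y
        · simp [hA, hy, Finset.sum_ite_eq]
        · simp [hy]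
      simp_rw [step]
      simp [Finset.sum_ite_eq, hmem, hA]
    · simp [hA]
  calc ex0 p (fun ω => F (Y0 ω) (W ω)) A
      = ∑ ω, ∑ y ∈ Finset.image Y0 Finset.univ, ∑ w,
          (if A ω ∧ Y0 ω = y ∧ W ω = w then p ω * F y w else 0) :=
        Finset.sum_congr rfl fun ω _ => key ω
    _ = ∑ y ∈ Finset.image Y0 Finset.univ, ∑ ω, ∑ w,
          (if A ω ∧ Y0 ω = y ∧ W ω = w then p ω * F y w else 0) := Finset.sum_comm
    _ = ∑ y ∈ Finset.image Y0 Finset.univ, ∑ w, ∑ ω,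
          (if A ω ∧ Y0 ω = y ∧ W ω = w then p ω * F y w else 0) :=
        Finset.sum_congr rfl fun y _ => Finset.sum_comm
    _ = ∑ y ∈ Finset.image Y0 Finset.univ, ∑ w,
          F y w * pr p (fun ω => A ω ∧ Y0 ω = y ∧ W ω = w) :=
        Finset.sum_congr rfl fun y _ => Finset.sum_congr rfl fun w _ => (hmul y w).symm

lemma ex0_congr_fn (p : Ω → ℝ) {f f' : Ω → ℝ} {A : Ω → Prop}
    (h : ∀ ω, A ω → f ω = f' ω) : ex0 p f A = ex0 p f' A := by
  refine Finset.sum_congr rfl fun ω _ => ?_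
  by_cases hA : A ω
  · simp [hA, h ω hA]
  · simp [hA]

lemma ex0_const_on (p : Ω → ℝ) {f : Ω → ℝ} {A : Ω → Prop} {c : ℝ}
    (h : ∀ ω, A ω → f ω = c) : ex0 p f A = c * pr p A := by
  unfold ex0 pr
  rw [Finset.mul_sum]
  refine Finset.sum_congr rfl fun ω _ => ?_
  by_cases hA : A ω
  · simp [hA, h ω hA, mul_comm]
  · simp [hA]

lemma ex0_sub (p : Ω → ℝ) (f k : Ω → ℝ) (A : Ω → Prop) :
    ex0 p (fun ω => f ω - k ω) A = ex0 p f A - ex0 p k A := by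
  unfold ex0
  rw [← Finset.sum_sub_distrib]
  refine Finset.sum_congr rfl fun ω _ => ?_
  by_cases hA : A ω <;> simp [hA, mul_sub]

/-- Completeness upgrades the observed outcome bridge equation to the latent outcome
bridge equation (completeness step in the proof of Theorem 1). -/
theorem completeness_upgrades_outcome_bridge
    {𝒳 𝒰 𝒵 𝒲 : Type*} [Fintype 𝒳] [Fintype 𝒰] [Fintype 𝒵] [Fintype 𝒲]
    (p : Ω → ℝ) (hp : ∀ ω, 0 ≤ p ω) (hp1 : ∑ ω, p ω = 1)
    (R : Ω → Bool) (X : Ω → 𝒳) (U : Ω → 𝒰) (Z : Ω → 𝒵) (W : Ω → 𝒲)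
    (Y0 : Ω → ℝ) (h : 𝒲 → 𝒳 → ℝ)
    -- (i) negative control assumption: (Y₀, W) ⫫ (Z, R) | (U, X)
    (hNC : ∀ (y : ℝ) (w : 𝒲) (z : 𝒵) (r : Bool) (u : 𝒰) (x : 𝒳),
      0 < pr p (fun ω => U ω = u ∧ X ω = x) →
      cpr p (fun ω => (Y0 ω = y ∧ W ω = w) ∧ (Z ω = z ∧ R ω = r))
          (fun ω => U ω = u ∧ X ω = x)
        = cpr p (fun ω => Y0 ω = y ∧ W ω = w) (fun ω => U ω = u ∧ X ω = x)
          * cpr p (fun ω => Z ω = z ∧ R ω = r) (fun ω => U ω = u ∧ X ω = x))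
    -- (ii) completeness
    (hComp : ∀ (x : 𝒳) (g : 𝒰 → ℝ),
      (∀ z : 𝒵, 0 < pr p (fun ω => Z ω = z ∧ X ω = x ∧ R ω = true) →
        cex p (fun ω => g (U ω)) (fun ω => Z ω = z ∧ X ω = x ∧ R ω = true) = 0) →
      ∀ u : 𝒰, 0 < pr p (fun ω => U ω = u ∧ X ω = x ∧ R ω = true) → g u = 0)
    -- (iii) observed outcome bridge equation
    (hBridge : ∀ (z : 𝒵) (x : 𝒳), 0 < pr p (fun ω => Z ω = z ∧ X ω = x ∧ R ω = true) →
      cex p Y0 (fun ω => Z ω = z ∧ X ω = x ∧ R ω = true)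
        = cex p (fun ω => h (W ω) (X ω)) (fun ω => Z ω = z ∧ X ω = x ∧ R ω = true)) :
    ∀ (u : 𝒰) (x : 𝒳), 0 < pr p (fun ω => U ω = u ∧ X ω = x ∧ R ω = true) →
      cex p Y0 (fun ω => U ω = u ∧ X ω = x ∧ R ω = true)
        = cex p (fun ω => h (W ω) (X ω)) (fun ω => U ω = u ∧ X ω = x ∧ R ω = true) := by
  intro u0 x hpos0
  -- notation
  set F : ℝ → 𝒲 → ℝ := fun y w => y - h w x with hF
  set f : Ω → ℝ := fun ω => Y0 ω - h (W ω) x with hf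
  have hfF : f = fun ω => F (Y0 ω) (W ω) := rfl
  -- the bridge numerator vanishes
  have hS0 : ∀ z : 𝒵, 0 < pr p (fun ω => Z ω = z ∧ X ω = x ∧ R ω = true) →
      ex0 p f (fun ω => Z ω = z ∧ X ω = x ∧ R ω = true) = 0 := by
    intro z hz
    have hb := hBridge z x hz
    unfold cex at hb
    have hnum : ex0 p Y0 (fun ω => Z ω = z ∧ X ω = x ∧ R ω = true)
        = ex0 p (fun ω => h (W ω) (X ω)) (fun ω => Z ω = z ∧ X ω = x ∧ R ω = true) := by
      have hd : pr p (fun ω => Z ω = z ∧ X ω = x ∧ R ω = true) ≠ 0 := hz.ne'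
      have := hb
      rw [div_eq_div_iff hd hd] at this
      unfold ex0
      exact mul_right_cancel₀ hd this
    have hX : ex0 p (fun ω => h (W ω) (X ω)) (fun ω => Z ω = z ∧ X ω = x ∧ R ω = true)
        = ex0 p (fun ω => h (W ω) x) (fun ω => Z ω = z ∧ X ω = x ∧ R ω = true) :=
      ex0_congr_fn p fun ω hω => by rw [hω.2.1]
    rw [hf, ex0_sub, hnum, hX, sub_self]
  -- key independence consequence
  have hstar : ∀ (z : 𝒵) (u : 𝒰), 0 < pr p (fun ω => U ω = u ∧ X ω = x) →
      ex0 p f (fun ω => (Z ω = z ∧ R ω = true) ∧ (U ω = u ∧ X ω = x))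
          * pr p (fun ω => U ω = u ∧ X ω = x)
        = ex0 p f (fun ω => U ω = u ∧ X ω = x)
          * pr p (fun ω => (Z ω = z ∧ R ω = true) ∧ (U ω = u ∧ X ω = x)) := by
    intro z u hB
    have hterm : ∀ (y : ℝ) (w : 𝒲),
        pr p (fun ω => ((Z ω = z ∧ R ω = true) ∧ (U ω = u ∧ X ω = x)) ∧ Y0 ω = y ∧ W ω = w)
            * pr p (fun ω => U ω = u ∧ X ω = x)
          = pr p (fun ω => (U ω = u ∧ X ω = x) ∧ Y0 ω = y ∧ W ω = w)
            * pr p (fun ω => (Z ω = z ∧ R ω = true) ∧ (U ω = u ∧ X ω = x)) := by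
      intro y w
      have hnc := hNC y w z true u x hB
      unfold cpr at hnc
      have e1 : pr p (fun ω => ((Y0 ω = y ∧ W ω = w) ∧ (Z ω = z ∧ R ω = true))
            ∧ (U ω = u ∧ X ω = x))
          = pr p (fun ω => ((Z ω = z ∧ R ω = true) ∧ (U ω = u ∧ X ω = x)) ∧ Y0 ω = y ∧ W ω = w) :=
        pr_congr p fun ω => by tauto
      have e2 : pr p (fun ω => (Y0 ω = y ∧ W ω = w) ∧ (U ω = u ∧ X ω = x))
          = pr p (fun ω => (U ω = u ∧ X ω = x) ∧ Y0 ω = y ∧ W ω = w) :=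
        pr_congr p fun ω => by tauto
      rw [e1, e2] at hnc
      have hBne := hB.ne'
      field_simp at hnc
      refine mul_right_cancel₀ hBne ?_
      linear_combination (pr p fun ω => U ω = u ∧ X ω = x) * hnc
    rw [hfF, ex0_group p Y0 W F _, ex0_group p Y0 W F _, Finset.sum_mul, Finset.sum_mul]
    refine Finset.sum_congr rfl fun y _ => ?_
    rw [Finset.sum_mul, Finset.sum_mul]
    refine Finset.sum_congr rfl fun w _ => ?_
    rw [mul_assoc, mul_assoc, hterm y w]
  -- define the completeness test function
  set g : 𝒰 → ℝ := fun u => ex0 p f (fun ω => U ω = u ∧ X ω = x)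
      / pr p (fun ω => U ω = u ∧ X ω = x) with hg
  -- the conditional expectation of g(U) given (Z, X, R=1) vanishes
  have hGnum : ∀ z : 𝒵, 0 < pr p (fun ω => Z ω = z ∧ X ω = x ∧ R ω = true) →
      cex p (fun ω => g (U ω)) (fun ω => Z ω = z ∧ X ω = x ∧ R ω = true) = 0 := by
    intro z hz
    have hpart : ex0 p (fun ω => g (U ω)) (fun ω => Z ω = z ∧ X ω = x ∧ R ω = true)
        = ∑ u, ex0 p (fun ω => g (U ω))
            (fun ω => (Z ω = z ∧ X ω = x ∧ R ω = true) ∧ U ω = u) :=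
      ex0_partition p _ U _
    have hterm : ∀ u : 𝒰, ex0 p (fun ω => g (U ω))
          (fun ω => (Z ω = z ∧ X ω = x ∧ R ω = true) ∧ U ω = u)
        = ex0 p f (fun ω => (Z ω = z ∧ R ω = true) ∧ (U ω = u ∧ X ω = x)) := by
      intro u
      have hcc : ∀ ω, ((Z ω = z ∧ X ω = x ∧ R ω = true) ∧ U ω = u)
          ↔ ((Z ω = z ∧ R ω = true) ∧ (U ω = u ∧ X ω = x)) := fun ω => by tauto
      rw [ex0_congr p (fun ω => g (U ω)) hcc]
      have hconst : ex0 p (fun ω => g (U ω))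
            (fun ω => (Z ω = z ∧ R ω = true) ∧ (U ω = u ∧ X ω = x))
          = g u * pr p (fun ω => (Z ω = z ∧ R ω = true) ∧ (U ω = u ∧ X ω = x)) :=
        ex0_const_on p fun ω hω => by rw [hω.2.1]
      rw [hconst]
      by_cases hB : 0 < pr p (fun ω => U ω = u ∧ X ω = x)
      · have hs := hstar z u hB
        rw [hg]
        field_simp [hB.ne']
        linarith [hs]
      · have hB0 : pr p (fun ω => U ω = u ∧ X ω = x) = 0 :=
          le_antisymm (not_lt.1 hB) (pr_nonneg p hp _)
        have hsub : pr p (fun ω => (Z ω = z ∧ R ω = true) ∧ (U ω = u ∧ X ω = x)) = 0 := by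
          have := pr_mono p hp (fun ω (hω : (Z ω = z ∧ R ω = true) ∧ (U ω = u ∧ X ω = x)) => hω.2)
          have hnn := pr_nonneg p hp (fun ω => (Z ω = z ∧ R ω = true) ∧ (U ω = u ∧ X ω = x))
          linarith
        rw [hsub, mul_zero, ex0_eq_zero_of_pr_eq_zero p hp f hsub]
    have htot : ex0 p (fun ω => g (U ω)) (fun ω => Z ω = z ∧ X ω = x ∧ R ω = true)
        = ex0 p f (fun ω => Z ω = z ∧ X ω = x ∧ R ω = true) := by
      rw [hpart]
      rw [Finset.sum_congr rfl fun u _ => hterm u]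
      rw [← Finset.sum_congr rfl fun u _ => ex0_congr p f
        (fun ω => by tauto :
          ∀ ω, ((Z ω = z ∧ X ω = x ∧ R ω = true) ∧ U ω = u)
            ↔ ((Z ω = z ∧ R ω = true) ∧ (U ω = u ∧ X ω = x)))]
      exact (ex0_partition p f U _).symm
    unfold cex
    have : ex0 p (fun ω => g (U ω)) (fun ω => Z ω = z ∧ X ω = x ∧ R ω = true) = 0 := by
      rw [htot, hS0 z hz]
    unfold ex0 at this
    rw [this, zero_div]
  -- completeness gives g u0 = 0
  have hg0 : g u0 = 0 := hComp x g hGnum u0 hpos0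
  have hBpos : 0 < pr p (fun ω => U ω = u0 ∧ X ω = x) := by
    have hm := pr_mono p hp (A := fun ω => U ω = u0 ∧ X ω = x ∧ R ω = true)
      (B := fun ω => U ω = u0 ∧ X ω = x) (fun ω hω => ⟨hω.1, hω.2.1⟩)
    linarith
  have hSB : ex0 p f (fun ω => U ω = u0 ∧ X ω = x) = 0 := by
    rw [hg] at hg0
    exact (div_eq_zero_iff.1 hg0).resolve_right hBpos.ne'
  -- sum hstar over z to condition on R = 1
  have hRstep : ex0 p f (fun ω => (R ω = true) ∧ (U ω = u0 ∧ X ω = x))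
      * pr p (fun ω => U ω = u0 ∧ X ω = x)
      = ex0 p f (fun ω => U ω = u0 ∧ X ω = x)
        * pr p (fun ω => (R ω = true) ∧ (U ω = u0 ∧ X ω = x)) := by
    have e1 : ex0 p f (fun ω => (R ω = true) ∧ (U ω = u0 ∧ X ω = x))
        = ∑ z, ex0 p f (fun ω => (Z ω = z ∧ R ω = true) ∧ (U ω = u0 ∧ X ω = x)) := by
      rw [ex0_partition p f Z (fun ω => (R ω = true) ∧ (U ω = u0 ∧ X ω = x))]
      exact Finset.sum_congr rfl fun z _ => ex0_congr p f fun ω => by tauto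
    have e2 : pr p (fun ω => (R ω = true) ∧ (U ω = u0 ∧ X ω = x))
        = ∑ z, pr p (fun ω => (Z ω = z ∧ R ω = true) ∧ (U ω = u0 ∧ X ω = x)) := by
      rw [pr_partition p Z (fun ω => (R ω = true) ∧ (U ω = u0 ∧ X ω = x))]
      exact Finset.sum_congr rfl fun z _ => pr_congr p fun ω => by tauto
    rw [e1, e2, Finset.sum_mul, Finset.mul_sum]
    exact Finset.sum_congr rfl fun z _ => hstar z u0 hBpos
  have hTarget : ex0 p f (fun ω => U ω = u0 ∧ X ω = x ∧ R ω = true) = 0 := by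
    have : ex0 p f (fun ω => (R ω = true) ∧ (U ω = u0 ∧ X ω = x)) = 0 := by
      rw [hSB, zero_mul] at hRstep
      exact (mul_eq_zero.1 hRstep).resolve_right hBpos.ne'
    rw [← ex0_congr p f (fun ω => by tauto :
      ∀ ω, (U ω = u0 ∧ X ω = x ∧ R ω = true) ↔ ((R ω = true) ∧ (U ω = u0 ∧ X ω = x)))] at this
    exact this
  -- conclude
  have hnum : ex0 p Y0 (fun ω => U ω = u0 ∧ X ω = x ∧ R ω = true)
      = ex0 p (fun ω => h (W ω) (X ω)) (fun ω => U ω = u0 ∧ X ω = x ∧ R ω = true) := by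
    have hsplit := ex0_sub p Y0 (fun ω => h (W ω) x)
      (fun ω => U ω = u0 ∧ X ω = x ∧ R ω = true)
    have hfx : ex0 p (fun ω => Y0 ω - h (W ω) x) (fun ω => U ω = u0 ∧ X ω = x ∧ R ω = true)
        = 0 := hTarget
    have hX : ex0 p (fun ω => h (W ω) (X ω)) (fun ω => U ω = u0 ∧ X ω = x ∧ R ω = true)
        = ex0 p (fun ω => h (W ω) x) (fun ω => U ω = u0 ∧ X ω = x ∧ R ω = true) :=
      ex0_congr_fn p fun ω hω => by rw [hω.2.1]
    rw [hX]
    linarith [hsplit, hfx]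
  unfold cex
  unfold ex0 at hnum
  rw [hnum]
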